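/- arXiv:2511.18667 — 2 statements merged into one kernel-verified Lean document; each statement's English description precedes it below -/
import Mathlib

section
/- (Modular implicit differentiation, Proposition 1.) Let F : ℝⁿ × ℝᵖ → ℝⁿ be Fréchet differentiable and let x̂ : ℝᵖ → ℝⁿ be Fréchet differentiable with x̂(θ) = F(x̂(θ), θ) for all θ ∈ ℝᵖ. Fix θ₀, let J : ℝⁿ →L[ℝ] ℝⁿ be the partial Fréchet derivative of F in its first argument at (x̂(θ₀), θ₀), let ∂_θF : ℝᵖ →L[ℝ] ℝⁿ be the partial derivative in the second argument at the same point, and assume id − J is invertible. Then for every linear functional g : ℝⁿ →L[ℝ] ℝ, the vector–Jacobian product g ∘ Dx̂(θ₀) equals β* ∘ ∂_θF, where β* : ℝⁿ →L[ℝ] ℝ is the unique linear functional satisfying the fixed-point equation β* = β* ∘ J + g. -/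
/-!
Differentiating the fixed-point identity `x̂ θ = F (x̂ θ, θ)` by the chain rule gives
`(id - J) ∘ Dx̂ = ∂θF`. A functional `β` solves `β = β ∘ J + g` exactly when `β ∘ (id - J) = g`,
which has the unique solution `g ∘ (id - J)⁻¹`; composing with `Dx̂` then gives
`g ∘ Dx̂ = β ∘ (id - J) ∘ Dx̂ = β ∘ ∂θF`.
-/

open ContinuousLinearMap

theorem HasFDerivAt.id_sub_comp_eq_of_fixedPoint {𝕜 E P : Type*} [NontriviallyNormedField 𝕜]
    [NormedAddCommGroup E] [NormedSpace 𝕜 E] [NormedAddCommGroup P] [NormedSpace 𝕜 P] {F : E × P → E} {x : P → E} {θ₀ : P}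
    {J : E →L[𝕜] E} {dθF : P →L[𝕜] E} {Dx : P →L[𝕜] E}
    (hfix : ∀ θ, x θ = F (x θ, θ))
    (hF : HasFDerivAt F (J.comp (fst 𝕜 E P) + dθF.comp (snd 𝕜 E P)) (x θ₀, θ₀))
    (hx : HasFDerivAt x Dx θ₀) :
    (ContinuousLinearMap.id 𝕜 E - J).comp Dx = dθF := by
  have hx' : HasFDerivAt x ((J.comp (fst 𝕜 E P) + dθF.comp (snd 𝕜 E P)).comp
      (Dx.prod (ContinuousLinearMap.id 𝕜 P))) θ₀ := by
    have hcomp := hF.comp (f := fun θ => (x θ, θ)) θ₀ (hx.prodMk (hasFDerivAt_id θ₀))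
    rwa [show (F ∘ fun θ => (x θ, θ)) = x from funext fun θ => (hfix θ).symm] at hcomp
  have hDx : Dx = J.comp Dx + dθF := by
    ext v
    simpa using DFunLike.congr_fun (hx.unique hx') v
  rw [sub_comp, id_comp, sub_eq_iff_eq_add', ← hDx]

theorem ContinuousLinearMap.eq_comp_add_iff_comp_id_sub_eq {R E G : Type*} [Ring R]
    [TopologicalSpace E] [AddCommGroup E] [Module R E] [IsTopologicalAddGroup E]
    [TopologicalSpace G] [AddCommGroup G] [Module R G] [IsTopologicalAddGroup G]
    (β g : E →L[R] G) (J : E →L[R] E) :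
    β = β.comp J + g ↔ β.comp (ContinuousLinearMap.id R E - J) = g := by
  rw [comp_sub, comp_id, sub_eq_iff_eq_add']

theorem ContinuousLinearMap.comp_eq_iff_eq_comp_of_inverse {R E G : Type*} [Semiring R]
    [TopologicalSpace E] [AddCommMonoid E] [Module R E]
    [TopologicalSpace G] [AddCommMonoid G] [Module R G]
    {A K : E →L[R] E} (hAK : A.comp K = ContinuousLinearMap.id R E)
    (hKA : K.comp A = ContinuousLinearMap.id R E) (β g : E →L[R] G) :
    β.comp A = g ↔ β = g.comp K := by
  constructor
  · rintro rfl
    rw [comp_assoc, hAK, comp_id]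
  · rintro rfl
    rw [comp_assoc, hKA, comp_id]

/-- Modular implicit differentiation (Proposition 1): for any upstream gradient
(row vector) `g`, the vector–Jacobian product `g ∘ Dx̂(θ₀)` equals `β* ∘ ∂θF`,
where `β*` is the unique linear functional satisfying `β* = β* ∘ J + g`. -/
theorem modular_implicit_differentiation
    (n p : ℕ)
    (F : EuclideanSpace ℝ (Fin n) × EuclideanSpace ℝ (Fin p) → EuclideanSpace ℝ (Fin n))
    (xhat : EuclideanSpace ℝ (Fin p) → EuclideanSpace ℝ (Fin n))
    (hfix : ∀ θ, xhat θ = F (xhat θ, θ))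
    (θ₀ : EuclideanSpace ℝ (Fin p))
    (J : EuclideanSpace ℝ (Fin n) →L[ℝ] EuclideanSpace ℝ (Fin n))
    (dθF : EuclideanSpace ℝ (Fin p) →L[ℝ] EuclideanSpace ℝ (Fin n))
    (hF : HasFDerivAt F
      (J.comp (ContinuousLinearMap.fst ℝ (EuclideanSpace ℝ (Fin n)) (EuclideanSpace ℝ (Fin p))) +
        dθF.comp (ContinuousLinearMap.snd ℝ (EuclideanSpace ℝ (Fin n)) (EuclideanSpace ℝ (Fin p))))
      (xhat θ₀, θ₀))
    (Dxhat : EuclideanSpace ℝ (Fin p) →L[ℝ] EuclideanSpace ℝ (Fin n))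
    (hxhat : HasFDerivAt xhat Dxhat θ₀)
    (K : EuclideanSpace ℝ (Fin n) →L[ℝ] EuclideanSpace ℝ (Fin n))
    (hK₁ : (ContinuousLinearMap.id ℝ (EuclideanSpace ℝ (Fin n)) - J).comp K =
      ContinuousLinearMap.id ℝ (EuclideanSpace ℝ (Fin n)))
    (hK₂ : K.comp (ContinuousLinearMap.id ℝ (EuclideanSpace ℝ (Fin n)) - J) =
      ContinuousLinearMap.id ℝ (EuclideanSpace ℝ (Fin n))) :
    ∀ g : EuclideanSpace ℝ (Fin n) →L[ℝ] ℝ,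
      (∃! β : EuclideanSpace ℝ (Fin n) →L[ℝ] ℝ, β = β.comp J + g) ∧
      ∀ β : EuclideanSpace ℝ (Fin n) →L[ℝ] ℝ, β = β.comp J + g →
        g.comp Dxhat = β.comp dθF := by
  intro g
  have hDx := HasFDerivAt.id_sub_comp_eq_of_fixedPoint hfix hF hxhat
  have hβ_iff : ∀ β, β = β.comp J + g ↔ β = g.comp K := fun β =>
    (eq_comp_add_iff_comp_id_sub_eq β g J).trans (comp_eq_iff_eq_comp_of_inverse hK₁ hK₂ β g)
  refine ⟨(existsUnique_congr hβ_iff).2 existsUnique_eq, fun β hβ => ?_⟩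
  rw [← hDx, ← comp_assoc, (eq_comp_add_iff_comp_id_sub_eq β g J).1 hβ]
end

section
/- (Equation (7) of the paper.) Let F : ℝⁿ × ℝᵖ → ℝⁿ be Fréchet differentiable, let x̂ : ℝᵖ → ℝⁿ be Fréchet differentiable with x̂(θ) = F(x̂(θ), θ) for all θ, and let ℓ : ℝⁿ → ℝ be Fréchet differentiable. Fix θ₀, let J be the partial Fréchet derivative of F in its first argument at (x̂(θ₀), θ₀) and ∂_θF the partial derivative in the second argument there, and assume id − J is invertible. Then the Fréchet derivative of the composite θ ↦ ℓ(x̂(θ)) at θ₀ equals Dℓ(x̂(θ₀)) ∘ (id − J)⁻¹ ∘ ∂_θF. -/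
/-!
Differentiating the fixed-point identity `x̂ θ = F (x̂ θ, θ)` gives `Dx̂ = J ∘ Dx̂ + ∂θF`, i.e.
`(id - J) ∘ Dx̂ = ∂θF`, so `Dx̂ = K ∘ ∂θF` for a left inverse `K` of `id - J`; the chain rule
for `ℓ ∘ x̂` then gives the formula.
-/

open ContinuousLinearMap

section FixedPointDerivative

variable {𝕜 : Type*} [NontriviallyNormedField 𝕜]
  {E : Type*} [NormedAddCommGroup E] [NormedSpace 𝕜 E]
  {P : Type*} [NormedAddCommGroup P] [NormedSpace 𝕜 P]

theorem HasFDerivAt.eq_comp_add_of_forall_eq_apply_prodMk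
    {F : E × P → E} {x : P → E} {θ₀ : P} {J : E →L[𝕜] E} {B D : P →L[𝕜] E}
    (hfix : ∀ θ, x θ = F (x θ, θ))
    (hF : HasFDerivAt F (J.comp (fst 𝕜 E P) + B.comp (snd 𝕜 E P)) (x θ₀, θ₀))
    (hx : HasFDerivAt x D θ₀) :
    D = J.comp D + B := by
  have hcomp : HasFDerivAt (fun θ => F (x θ, θ)) (J.comp D + B) θ₀ :=
    (hF.comp (f := fun θ => (x θ, θ)) θ₀ (hx.prodMk (hasFDerivAt_id θ₀))).congr_fderiv
      (ext fun v => by simp)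
  exact hx.unique (by simpa only [← hfix] using hcomp)

theorem ContinuousLinearMap.eq_comp_of_eq_comp_add {K J : E →L[𝕜] E} {B D : P →L[𝕜] E}
    (hK : K.comp (ContinuousLinearMap.id 𝕜 E - J) = ContinuousLinearMap.id 𝕜 E)
    (hD : D = J.comp D + B) :
    D = K.comp B := by
  have hB : (ContinuousLinearMap.id 𝕜 E - J).comp D = B := by
    rw [sub_comp, id_comp]
    nth_rewrite 1 [hD]
    abel
  calc D = (K.comp (ContinuousLinearMap.id 𝕜 E - J)).comp D := by rw [hK, id_comp]
    _ = K.comp B := by rw [comp_assoc, hB]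

end FixedPointDerivative

theorem deriv_of_loss_through_fixed_point_general
    (n p : ℕ)
    (F : EuclideanSpace ℝ (Fin n) × EuclideanSpace ℝ (Fin p) → EuclideanSpace ℝ (Fin n))
    (xhat : EuclideanSpace ℝ (Fin p) → EuclideanSpace ℝ (Fin n))
    (hfix : ∀ θ, xhat θ = F (xhat θ, θ))
    (ℓ : EuclideanSpace ℝ (Fin n) → ℝ)
    (θ₀ : EuclideanSpace ℝ (Fin p))
    (J : EuclideanSpace ℝ (Fin n) →L[ℝ] EuclideanSpace ℝ (Fin n))
    (dθF : EuclideanSpace ℝ (Fin p) →L[ℝ] EuclideanSpace ℝ (Fin n))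
    (hF : HasFDerivAt F
      (J.comp (ContinuousLinearMap.fst ℝ (EuclideanSpace ℝ (Fin n)) (EuclideanSpace ℝ (Fin p))) +
        dθF.comp (ContinuousLinearMap.snd ℝ (EuclideanSpace ℝ (Fin n)) (EuclideanSpace ℝ (Fin p))))
      (xhat θ₀, θ₀))
    (Dxhat : EuclideanSpace ℝ (Fin p) →L[ℝ] EuclideanSpace ℝ (Fin n))
    (hxhat : HasFDerivAt xhat Dxhat θ₀)
    (Dℓ : EuclideanSpace ℝ (Fin n) →L[ℝ] ℝ)
    (hℓ : HasFDerivAt ℓ Dℓ (xhat θ₀))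
    (K : EuclideanSpace ℝ (Fin n) →L[ℝ] EuclideanSpace ℝ (Fin n))
    (hK₂ : K.comp (ContinuousLinearMap.id ℝ (EuclideanSpace ℝ (Fin n)) - J) =
      ContinuousLinearMap.id ℝ (EuclideanSpace ℝ (Fin n))) :
    HasFDerivAt (fun θ => ℓ (xhat θ)) ((Dℓ.comp K).comp dθF) θ₀ := by
  have hDxhat : Dxhat = K.comp dθF :=
    eq_comp_of_eq_comp_add hK₂ (hF.eq_comp_add_of_forall_eq_apply_prodMk hfix hxhat)
  rw [comp_assoc, ← hDxhat]
  exact hℓ.comp θ₀ hxhat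

/-- Equation (7) of the paper: the Fréchet derivative of the composite loss
`θ ↦ ℓ(x̂(θ))` at `θ₀` equals `Dℓ(x̂(θ₀)) ∘ (id − J)⁻¹ ∘ ∂θF`, where `K = (id − J)⁻¹`. -/
theorem deriv_of_loss_through_fixed_point
    (n p : ℕ)
    (F : EuclideanSpace ℝ (Fin n) × EuclideanSpace ℝ (Fin p) → EuclideanSpace ℝ (Fin n))
    (xhat : EuclideanSpace ℝ (Fin p) → EuclideanSpace ℝ (Fin n))
    (hfix : ∀ θ, xhat θ = F (xhat θ, θ))
    (ℓ : EuclideanSpace ℝ (Fin n) → ℝ)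
    (θ₀ : EuclideanSpace ℝ (Fin p))
    (J : EuclideanSpace ℝ (Fin n) →L[ℝ] EuclideanSpace ℝ (Fin n))
    (dθF : EuclideanSpace ℝ (Fin p) →L[ℝ] EuclideanSpace ℝ (Fin n))
    (hF : HasFDerivAt F
      (J.comp (ContinuousLinearMap.fst ℝ (EuclideanSpace ℝ (Fin n)) (EuclideanSpace ℝ (Fin p))) +
        dθF.comp (ContinuousLinearMap.snd ℝ (EuclideanSpace ℝ (Fin n)) (EuclideanSpace ℝ (Fin p))))
      (xhat θ₀, θ₀))
    (Dxhat : EuclideanSpace ℝ (Fin p) →L[ℝ] EuclideanSpace ℝ (Fin n))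
    (hxhat : HasFDerivAt xhat Dxhat θ₀)
    (Dℓ : EuclideanSpace ℝ (Fin n) →L[ℝ] ℝ)
    (hℓ : HasFDerivAt ℓ Dℓ (xhat θ₀))
    (K : EuclideanSpace ℝ (Fin n) →L[ℝ] EuclideanSpace ℝ (Fin n))
    (hK₁ : (ContinuousLinearMap.id ℝ (EuclideanSpace ℝ (Fin n)) - J).comp K =
      ContinuousLinearMap.id ℝ (EuclideanSpace ℝ (Fin n)))
    (hK₂ : K.comp (ContinuousLinearMap.id ℝ (EuclideanSpace ℝ (Fin n)) - J) =
      ContinuousLinearMap.id ℝ (EuclideanSpace ℝ (Fin n))) :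
    HasFDerivAt (fun θ => ℓ (xhat θ)) ((Dℓ.comp K).comp dθF) θ₀ :=
  deriv_of_loss_through_fixed_point_general n p F xhat hfix ℓ θ₀ J dθF hF Dxhat hxhat Dℓ hℓ K hK₂
end
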